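/- (Discrete Riesz representation for causal time-homogeneous linear functionals) Let H = (H_t)_{t∈ℕ} be a family of linear functionals on the space of c₀-type inputs x : ℤ → ℝ with x(s) = 0 for s < 0, each H_t bounded with sup_t ‖H_t‖ < ∞, causal and time-homogeneous. Then there exists a unique ρ : ℕ → ℝ with Σ_s |ρ(s)| ≤ sup_t ‖H_t‖ such that H_t(x) = Σ_{s=0}^t ρ(s) x(t−s) for all t and all finitely supported x. -/
import Mathlib


/-- An admissible input: a finitely supported sequence vanishing on negatives. -/
def AdmissibleInput (x : ℤ → ℝ) : Prop :=
  (Function.support x).Finite ∧ ∀ s : ℤ, s < 0 → x s = 0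

/-- Discrete Riesz representation for causal time-homogeneous bounded linear
functionals: there is a unique summable `ρ : ℕ → ℝ` with `∑ |ρ(s)| ≤ B`
(the uniform norm bound) representing `H_t(x) = ∑_{s=0}^t ρ(s) x(t-s)` on all
finitely supported inputs vanishing on negatives. -/
theorem discrete_riesz_representation
    (H : ℕ → (ℤ → ℝ) → ℝ)
    (hLin : ∀ t : ℕ, ∀ (x y : ℤ → ℝ) (a b : ℝ),
      H t (fun s => a * x s + b * y s) = a * H t x + b * H t y)
    (B : ℝ)
    (hBdd : ∀ t : ℕ, ∀ x : ℤ → ℝ, AdmissibleInput x → (∀ s, |x s| ≤ 1) →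
      |H t x| ≤ B)
    (hCausal : ∀ t : ℕ, ∀ x₁ x₂ : ℤ → ℝ,
      (∀ s : ℤ, s ≤ (t : ℤ) → x₁ s = x₂ s) → H t x₁ = H t x₂)
    (hHom : ∀ t τ : ℕ, ∀ x : ℤ → ℝ,
      H t x = H (t + τ) (fun s => x (s - (τ : ℤ)))) :
    ∃! ρ : ℕ → ℝ,
      (Summable fun s => |ρ s|) ∧ (∑' s : ℕ, |ρ s|) ≤ B ∧
      ∀ t : ℕ, ∀ x : ℤ → ℝ, AdmissibleInput x →
        H t x = ∑ s ∈ Finset.range (t + 1), ρ s * x ((t : ℤ) - s) := by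
  classical
  -- basic linearity facts
  have hzero : ∀ t, H t (fun _ => 0) = 0 := by
    intro t
    have := hLin t (fun _ => 0) (fun _ => 0) 0 0
    simpa using this
  have hsum : ∀ t (F : Finset ℕ) (c : ℕ → ℝ) (f : ℕ → ℤ → ℝ),
      H t (fun s => ∑ k ∈ F, c k * f k s) = ∑ k ∈ F, c k * H t (f k) := by
    intro t F c f
    induction F using Finset.induction_on with
    | empty => simpa using hzero t
    | @insert a F' hk ih =>
      rw [Finset.sum_insert hk]
      have h1 : (fun s => ∑ k ∈ insert a F', c k * f k s)
          = fun s => c a * f a s + 1 * (∑ k ∈ F', c k * f k s) := by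
        funext s; rw [Finset.sum_insert hk]; ring
      rw [h1, hLin t (f a) (fun s => ∑ k ∈ F', c k * f k s) (c a) 1, ih]
      ring
  -- the kernel
  set δ : ℤ → ℝ := fun s => if s = 0 then 1 else 0 with hδ
  set ρ : ℕ → ℝ := fun n => H n δ with hρ
  have hAdmδ : AdmissibleInput δ := by
    constructor
    · apply Set.Finite.subset (Set.finite_singleton (0 : ℤ))
      intro m hm
      simp only [Function.mem_support, hδ, ne_eq, ite_eq_right_iff, one_ne_zero,
        imp_false, not_not] at hm
      simp [hm]
    · intro s hs
      simp [hδ]; omega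
  -- shifted kernels
  have hshift : ∀ t k : ℕ, k ≤ t →
      H t (fun s => if s = (k : ℤ) then 1 else 0) = ρ (t - k) := by
    intro t k hk
    have h1 := hHom (t - k) k δ
    rw [Nat.sub_add_cancel hk] at h1
    have h2 : (fun s : ℤ => δ (s - (k : ℤ))) = fun s => if s = (k : ℤ) then 1 else 0 := by
      funext s
      simp only [hδ, sub_eq_zero]
    rw [h2] at h1
    rw [← h1]
  -- the representation formula
  have hRep : ∀ t : ℕ, ∀ x : ℤ → ℝ, AdmissibleInput x →
      H t x = ∑ s ∈ Finset.range (t + 1), ρ s * x ((t : ℤ) - s) := by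
    intro t x hx
    set x' : ℤ → ℝ :=
      fun s => ∑ k ∈ Finset.range (t + 1), x (k : ℤ) * (if s = (k : ℤ) then 1 else 0)
      with hx'
    have hca : H t x = H t x' := by
      apply hCausal
      intro s hs
      rcases lt_or_ge s 0 with h | h
      · rw [hx.2 s h]
        simp only [hx']
        rw [eq_comm, Finset.sum_eq_zero]
        intro k _
        have hne : s ≠ (k : ℤ) := by omega
        simp [hne]
      · obtain ⟨m, rfl⟩ := Int.eq_ofNat_of_zero_le h
        have hm : m ∈ Finset.range (t + 1) := by
          rw [Finset.mem_range]
          omega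
        simp only [hx']
        rw [eq_comm, Finset.sum_eq_single m]
        · simp
        · intro k _ hne
          have : (m : ℤ) ≠ (k : ℤ) := by exact_mod_cast hne.symm
          simp [this]
        · intro h'; exact absurd hm h'
    rw [hca, hx',
      hsum t (Finset.range (t + 1)) (fun k => x (k : ℤ))
        (fun k => fun s => if s = (k : ℤ) then 1 else 0)]
    have hterm : ∀ k ∈ Finset.range (t + 1),
        x (k : ℤ) * H t (fun s => if s = (k : ℤ) then 1 else 0)
          = x (k : ℤ) * ρ (t - k) := by
      intro k hk
      rw [hshift t k (by rw [Finset.mem_range] at hk; omega)]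
    rw [Finset.sum_congr rfl hterm]
    -- reindex
    have hre := Finset.sum_range_reflect (fun k => x (k : ℤ) * ρ (t - k)) (t + 1)
    rw [← hre]
    apply Finset.sum_congr rfl
    intro s hs
    rw [Finset.mem_range] at hs
    have hs' : s ≤ t := by omega
    have h1 : t + 1 - 1 - s = t - s := by omega
    have h2 : t - (t - s) = s := by omega
    have h3 : ((t - s : ℕ) : ℤ) = (t : ℤ) - (s : ℤ) := by omega
    rw [h1, h2, h3]
    ring
  -- bound on partial sums
  have hBnd : ∀ t : ℕ, ∑ s ∈ Finset.range (t + 1), |ρ s| ≤ B := by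
    intro t
    set y : ℤ → ℝ := fun m =>
      if 0 ≤ m ∧ m ≤ (t : ℤ) then (if 0 ≤ ρ (t - m.toNat) then 1 else -1) else 0
      with hy
    have hAdmy : AdmissibleInput y := by
      constructor
      · apply Set.Finite.subset (Set.finite_Icc (0 : ℤ) (t : ℤ))
        intro m hm
        simp only [Function.mem_support, hy] at hm
        by_contra h
        simp only [Set.mem_Icc] at h
        have : ¬ (0 ≤ m ∧ m ≤ (t : ℤ)) := h
        simp [this] at hm
      · intro s hs
        have : ¬ (0 ≤ s ∧ s ≤ (t : ℤ)) := by omega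
        simp [hy, this]
    have hy1 : ∀ m, |y m| ≤ 1 := by
      intro m
      simp only [hy]
      split
      · split <;> simp
      · simp
    have hval := hRep t y hAdmy
    have hterm : ∀ s ∈ Finset.range (t + 1), ρ s * y ((t : ℤ) - s) = |ρ s| := by
      intro s hs
      rw [Finset.mem_range] at hs
      have hc : 0 ≤ (t : ℤ) - s ∧ (t : ℤ) - s ≤ (t : ℤ) := by omega
      have ht1 : ((t : ℤ) - (s : ℤ)).toNat = t - s := by omega
      have ht2 : t - (t - s) = s := by omega
      simp only [hy, if_pos hc, ht1, ht2]
      rcases le_or_gt 0 (ρ s) with h | h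
      · rw [if_pos h, abs_of_nonneg h]; ring
      · rw [if_neg (not_le.mpr h), abs_of_neg h]; ring
    rw [Finset.sum_congr rfl hterm] at hval
    calc ∑ s ∈ Finset.range (t + 1), |ρ s| = H t y := hval.symm
      _ ≤ |H t y| := le_abs_self _
      _ ≤ B := hBdd t y hAdmy hy1
  have hpartial : ∀ n : ℕ, ∑ s ∈ Finset.range n, |ρ s| ≤ B := by
    intro n
    calc ∑ s ∈ Finset.range n, |ρ s|
        ≤ ∑ s ∈ Finset.range (n + 1), |ρ s| := by
          apply Finset.sum_le_sum_of_subset_of_nonneg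
          · exact Finset.range_subset_range.mpr (by omega)
          · intro i _ _; exact abs_nonneg _
      _ ≤ B := hBnd n
  have hSummable : Summable fun s => |ρ s| :=
    summable_of_sum_range_le (fun n => abs_nonneg _) hpartial
  have hTsum : (∑' s : ℕ, |ρ s|) ≤ B :=
    Summable.tsum_le_of_sum_range_le hSummable hpartial
  refine ⟨ρ, ⟨hSummable, hTsum, hRep⟩, ?_⟩
  -- uniqueness
  rintro ρ' ⟨-, -, hrep'⟩
  funext n
  have h1 := hrep' n δ hAdmδ
  have h2 : ∑ s ∈ Finset.range (n + 1), ρ' s * δ ((n : ℤ) - s) = ρ' n := by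
    rw [Finset.sum_eq_single n]
    · simp [hδ]
    · intro k hk hne
      have : (n : ℤ) - k ≠ 0 := by
        rw [Finset.mem_range] at hk
        omega
      simp [hδ, this]
    · intro h; exact absurd (Finset.self_mem_range_succ n) h
  rw [h2] at h1
  rw [← h1]
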